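/- For each natural number n ≥ 1, the algebra P_n (defined below) satisfies the identity [[a,b],c] = 0 for all a,b,c in P_n, where [x,y] = xy - yx. -/

import Mathlib

inductive PBasis (n : ℕ) : Type
  | a : Fin n → Fin n → PBasis n
  | b : Fin n → Fin n → PBasis n
  | c : Fin n → PBasis n
  | d : Fin n → Fin n → PBasis n
  | e : Fin n → Fin n → PBasis n
  deriving DecidableEq

abbrev Pn (F : Type*) [Field F] (n : ℕ) : Type _ := PBasis n →₀ F

open PBasis in
noncomputable def mulB (F : Type*) [Field F] {n : ℕ} : PBasis n → PBasis n → Pn F n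
  | a i j, c k => if k = i then Finsupp.single (d i j) 1 else 0
  | b i j, c k => if k = i then Finsupp.single (e i j) 1 else 0
  | a i j, e k l => if i = k ∧ j = l then Finsupp.single (c j) 1 else 0
  | e k l, a i j => if i = k ∧ j = l then Finsupp.single (c j) 1 else 0
  | b i j, d k l => if i = k ∧ j = l then -Finsupp.single (c j) 1 else 0
  | d k l, b i j => if i = k ∧ j = l then -Finsupp.single (c j) 1 else 0
  | _, _ => 0

noncomputable def mulLin (F : Type*) [Field F] {n : ℕ} :
    Pn F n →ₗ[F] Pn F n →ₗ[F] Pn F n :=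
  Finsupp.lift (Pn F n →ₗ[F] Pn F n) F (PBasis n)
    (fun u => Finsupp.lift (Pn F n) F (PBasis n) (fun v => mulB F u v))

noncomputable instance (F : Type*) [Field F] (n : ℕ) : Mul (Pn F n) :=
  ⟨fun x y => mulLin F x y⟩

/-!
The multiplication table of `d i j` and `e i j` is symmetric, so they commute with everything.
The commutator of two basis elements is `0`, `± d i j` or `± e i j`, hence by bilinearity every
commutator `x * y - y * x` commutes with every `z`.
-/

namespace Pn

variable {F : Type*} [Field F] {n : ℕ}

theorem mulLin_single_single (u v : PBasis n) :
    mulLin F (Finsupp.single u 1) (Finsupp.single v 1) = mulB F u v := by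
  simp [mulLin]

theorem mulB_d_comm (i j : Fin n) (w : PBasis n) : mulB F (.d i j) w = mulB F w (.d i j) := by
  cases w <;> rfl

theorem mulB_e_comm (i j : Fin n) (w : PBasis n) : mulB F (.e i j) w = mulB F w (.e i j) := by
  cases w <;> rfl

variable (F n) in
noncomputable def commutant : Submodule F (Pn F n) :=
  (mulLin F).eqLocus (mulLin F).flip

theorem mem_commutant {x : Pn F n} : x ∈ commutant F n ↔ ∀ z, x * z = z * x := by
  rw [commutant, LinearMap.mem_eqLocus, LinearMap.ext_iff]
  rfl

theorem single_d_mem_commutant (i j : Fin n) : Finsupp.single (.d i j) 1 ∈ commutant F n :=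
  Finsupp.lhom_ext' fun w => LinearMap.ext_ring <| by
    simp [mulLin_single_single, mulB_d_comm]

theorem single_e_mem_commutant (i j : Fin n) : Finsupp.single (.e i j) 1 ∈ commutant F n :=
  Finsupp.lhom_ext' fun w => LinearMap.ext_ring <| by
    simp [mulLin_single_single, mulB_e_comm]

theorem mulB_sub_mulB_mem_commutant (u v : PBasis n) :
    mulB F u v - mulB F v u ∈ commutant F n := by
  cases u <;> cases v <;> simp only [mulB] <;> try split_ifs
  all_goals simp [single_d_mem_commutant, single_e_mem_commutant]

theorem mul_sub_mul_mem_commutant (x y : Pn F n) : x * y - y * x ∈ commutant F n := by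
  have hmkQ : (mulLin F).compr₂ (commutant F n).mkQ = (mulLin F).flip.compr₂ (commutant F n).mkQ :=
    Finsupp.lhom_ext' fun u => LinearMap.ext_ring <| Finsupp.lhom_ext' fun v =>
      LinearMap.ext_ring <| by
        simpa [mulLin_single_single, Submodule.Quotient.eq] using
          mulB_sub_mulB_mem_commutant u v
  have hxy := congr($hmkQ x y)
  simp only [LinearMap.compr₂_apply, LinearMap.flip_apply, Submodule.mkQ_apply,
    Submodule.Quotient.eq] at hxy
  exact hxy

end Pn

theorem stmt_general (F : Type*) [Field F] (n : ℕ) :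
    ∀ x y z : Pn F n, (x * y - y * x) * z - z * (x * y - y * x) = 0 :=
  fun x y z => sub_eq_zero.2 (Pn.mem_commutant.1 (Pn.mul_sub_mul_mem_commutant x y) z)

theorem stmt (F : Type*) [Field F] (n : ℕ) (hn : 1 ≤ n) :
    ∀ x y z : Pn F n, (x * y - y * x) * z - z * (x * y - y * x) = 0 :=
  stmt_general F n
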